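/- arXiv:2102.06456 — 3 statements merged into one kernel-verified Lean document; each statement's English description precedes it below -/
import Mathlib

section
/- Let f be a probability density on a space Y, and for parameters α, β let D_α, D_β : Y → {0,1} be measurable indicator functions. Define the joint likelihoods p_α(y,d) = f(y)·[D_α(y)]^d·[1-D_α(y)]^{1-d} and similarly p_β. Then the Hellinger affinity Σ_{d∈{0,1}} ∫ √(p_α(y,d) p_β(y,d)) f-a.e. equals ∫_{{y : D_α(y)=D_β(y)}} f(y) dy, and hence p_α = p_β as joint densities if and only if D_α = D_β f-almost everywhere. -/
/-! On `{D_α = D_β}` exactly one of the two square roots equals `f` and the other vanishes, while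
off this set both vanish; so the Hellinger affinity is the `f`-mass of `{D_α = D_β}`. The joint
density `(f D, f (1 - D))` is determined by `f D`, and `f D_α = f D_β` holds exactly where `f = 0`
or `D_α = D_β`, which is almost-everywhere agreement for the measure with density `f`. -/

open MeasureTheory

section ZeroOne

variable {a d e : ℝ}

lemma one_sub_eq_zero_or_one (hd : d = 0 ∨ d = 1) : 1 - d = 0 ∨ 1 - d = 1 := by
  rcases hd with rfl | rfl <;> norm_num

lemma sqrt_mul_mul_mul_eq_of_zero_or_one (ha : 0 ≤ a) (hd : d = 0 ∨ d = 1)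
    (he : e = 0 ∨ e = 1) : √((a * d) * (a * e)) = a * (d * e) := by
  rcases hd with rfl | rfl <;> rcases he with rfl | rfl <;> simp [Real.sqrt_mul_self ha]

lemma mul_add_one_sub_mul_one_sub_of_zero_or_one (hd : d = 0 ∨ d = 1) (he : e = 0 ∨ e = 1) :
    d * e + (1 - d) * (1 - e) = if d = e then 1 else 0 := by
  rcases hd with rfl | rfl <;> rcases he with rfl | rfl <;> norm_num

lemma abs_mul_le_one_of_zero_or_one (hd : d = 0 ∨ d = 1) (he : e = 0 ∨ e = 1) :
    |d * e| ≤ 1 := by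
  rcases hd with rfl | rfl <;> rcases he with rfl | rfl <;> norm_num

end ZeroOne

section Hellinger

variable {Y : Type*} [MeasurableSpace Y] {μ : Measure Y} {f Dα Dβ : Y → ℝ}

lemma integral_sqrt_mul_mul_eq_integral_mul (hf0 : ∀ y, 0 ≤ f y)
    (hDα01 : ∀ y, Dα y = 0 ∨ Dα y = 1) (hDβ01 : ∀ y, Dβ y = 0 ∨ Dβ y = 1) :
    ∫ y, √((f y * Dα y) * (f y * Dβ y)) ∂μ = ∫ y, f y * (Dα y * Dβ y) ∂μ := by
  congr with y
  exact sqrt_mul_mul_mul_eq_of_zero_or_one (hf0 y) (hDα01 y) (hDβ01 y)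

lemma integrable_mul_mul_of_zero_or_one (hf : Integrable f μ) (hDα : Measurable Dα)
    (hDβ : Measurable Dβ) (hDα01 : ∀ y, Dα y = 0 ∨ Dα y = 1) (hDβ01 : ∀ y, Dβ y = 0 ∨ Dβ y = 1) :
    Integrable (fun y => f y * (Dα y * Dβ y)) μ :=
  hf.mul_bdd (hDα.mul hDβ).aestronglyMeasurable
    (ae_of_all _ fun y => abs_mul_le_one_of_zero_or_one (hDα01 y) (hDβ01 y))

/-- The Hellinger affinity of the joint densities `(f D_α, f (1 - D_α))` and
`(f D_β, f (1 - D_β))`. -/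
theorem integral_sqrt_add_integral_sqrt_eq_setIntegral (hf : Integrable f μ)
    (hf0 : ∀ y, 0 ≤ f y) (hDα : Measurable Dα) (hDβ : Measurable Dβ)
    (hDα01 : ∀ y, Dα y = 0 ∨ Dα y = 1) (hDβ01 : ∀ y, Dβ y = 0 ∨ Dβ y = 1) :
    (∫ y, √((f y * Dα y) * (f y * Dβ y)) ∂μ) +
        (∫ y, √((f y * (1 - Dα y)) * (f y * (1 - Dβ y))) ∂μ) =
      ∫ y in {y | Dα y = Dβ y}, f y ∂μ := by
  have hDα01' y := one_sub_eq_zero_or_one (hDα01 y)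
  have hDβ01' y := one_sub_eq_zero_or_one (hDβ01 y)
  have hagree y : f y * (Dα y * Dβ y) + f y * ((1 - Dα y) * (1 - Dβ y)) =
      {y | Dα y = Dβ y}.indicator f y := by
    rw [← mul_add, mul_add_one_sub_mul_one_sub_of_zero_or_one (hDα01 y) (hDβ01 y)]
    simp [Set.indicator_apply]
  rw [integral_sqrt_mul_mul_eq_integral_mul hf0 hDα01 hDβ01,
    integral_sqrt_mul_mul_eq_integral_mul hf0 hDα01' hDβ01',
    ← integral_add (integrable_mul_mul_of_zero_or_one hf hDα hDβ hDα01 hDβ01)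
      (integrable_mul_mul_of_zero_or_one hf (hDα.const_sub 1) (hDβ.const_sub 1)
        hDα01' hDβ01'),
    funext hagree, integral_indicator (measurableSet_eq_fun hDα hDβ)]

end Hellinger

section Equivalence

variable {Y : Type*} [MeasurableSpace Y] {μ : Measure Y} {f g h : Y → ℝ}

lemma mul_ae_eq_mul_iff_ae_eq_withDensity (hf : AEMeasurable f μ) (hf0 : 0 ≤ᵐ[μ] f) :
    (fun y => f y * g y) =ᵐ[μ] (fun y => f y * h y) ↔
      g =ᵐ[μ.withDensity fun y => ENNReal.ofReal (f y)] h := by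
  rw [Filter.EventuallyEq, Filter.EventuallyEq, ae_withDensity_iff' hf.ennreal_ofReal]
  refine ⟨fun hgh => ?_, fun hgh => ?_⟩ <;> filter_upwards [hf0, hgh] with y hy0 hy
  · exact fun hfy => (mul_eq_mul_left_iff.mp hy).resolve_right fun h0 => hfy (by simp [h0])
  · rcases hy0.eq_or_lt with h0 | hpos
    · simp [← h0]
    · rw [hy (ENNReal.ofReal_pos.mpr hpos).ne']

lemma prod_mul_mul_one_sub_ae_eq_iff :
    (fun y => (f y * g y, f y * (1 - g y))) =ᵐ[μ] (fun y => (f y * h y, f y * (1 - h y))) ↔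
      (fun y => f y * g y) =ᵐ[μ] (fun y => f y * h y) := by
  refine ⟨fun hgh => hgh.fun_comp Prod.fst, fun hgh => ?_⟩
  filter_upwards [hgh] with y hy
  rw [Prod.mk.injEq, mul_one_sub, mul_one_sub, hy]
  exact ⟨rfl, rfl⟩

end Equivalence

theorem unconditional_likelihood_hellinger_and_equivalence_general
    {Y : Type*} [MeasurableSpace Y] (μ : Measure Y)
    (f Dα Dβ : Y → ℝ)
    (hDα : Measurable Dα) (hDβ : Measurable Dβ)
    (hf0 : ∀ y, 0 ≤ f y) (hf1 : ∫ y, f y ∂μ = 1)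
    (hDα01 : ∀ y, Dα y = 0 ∨ Dα y = 1) (hDβ01 : ∀ y, Dβ y = 0 ∨ Dβ y = 1) :
    ((∫ y, Real.sqrt ((f y * Dα y) * (f y * Dβ y)) ∂μ) +
       (∫ y, Real.sqrt ((f y * (1 - Dα y)) * (f y * (1 - Dβ y))) ∂μ) =
      ∫ y in {y | Dα y = Dβ y}, f y ∂μ) ∧
    (((fun y => (f y * Dα y, f y * (1 - Dα y))) =ᵐ[μ]
        (fun y => (f y * Dβ y, f y * (1 - Dβ y)))) ↔
      Dα =ᵐ[μ.withDensity fun y => ENNReal.ofReal (f y)] Dβ) := by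
  have hf_int : Integrable f μ := .of_integral_ne_zero (by simp [hf1])
  exact ⟨integral_sqrt_add_integral_sqrt_eq_setIntegral hf_int hf0 hDα hDβ hDα01 hDβ01,
    prod_mul_mul_one_sub_ae_eq_iff.trans
      (mul_ae_eq_mul_iff_ae_eq_withDensity hf_int.aemeasurable (ae_of_all _ hf0))⟩

theorem unconditional_likelihood_hellinger_and_equivalence
    {Y : Type*} [MeasurableSpace Y] (μ : Measure Y) [SigmaFinite μ]
    (f Dα Dβ : Y → ℝ)
    (hf : Measurable f) (hDα : Measurable Dα) (hDβ : Measurable Dβ)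
    (hf0 : ∀ y, 0 ≤ f y) (hf1 : ∫ y, f y ∂μ = 1)
    (hDα01 : ∀ y, Dα y = 0 ∨ Dα y = 1) (hDβ01 : ∀ y, Dβ y = 0 ∨ Dβ y = 1) :
    ((∫ y, Real.sqrt ((f y * Dα y) * (f y * Dβ y)) ∂μ) +
       (∫ y, Real.sqrt ((f y * (1 - Dα y)) * (f y * (1 - Dβ y))) ∂μ) =
      ∫ y in {y | Dα y = Dβ y}, f y ∂μ) ∧
    (((fun y => (f y * Dα y, f y * (1 - Dα y))) =ᵐ[μ]
        (fun y => (f y * Dβ y, f y * (1 - Dβ y)))) ↔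
      Dα =ᵐ[μ.withDensity fun y => ENNReal.ofReal (f y)] Dβ) :=
  unconditional_likelihood_hellinger_and_equivalence_general μ f Dα Dβ hDα hDβ hf0 hf1 hDα01 hDβ01
end

section
/- Let σ11, σ21, σ22 ∈ R with σ11, σ22 > 0, σ21 < 0, and let y1, y2 ∈ R satisfy σ21 y1 - σ11 y2 > 0 and y1 > 0. Then the set of θ ∈ [-π, π] satisfying the three inequalities σ21 sin θ ≤ σ22 cos θ, cos θ ≥ 0, and σ22 y1 cos θ ≥ (σ21 y1 - σ11 y2) sin θ equals the interval [arctan(σ22/σ21), arctan(σ22 y1/(σ21 y1 - σ11 y2))]. -/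
/-!
Where `cos θ > 0`, each restriction `a sin θ ≤ b cos θ` is a one-sided bound on
`tan θ`, a lower bound `b / a ≤ tan θ` when `a < 0` and an upper bound `tan θ ≤ b / a` when
`0 < a`; since `arctan` inverts `tan` on `(-π/2, π/2)`, these are the bounds
`arctan (b / a) ≤ θ` and `θ ≤ arctan (b / a)`. The restriction `cos θ ≥ 0` can only be tight at
`θ = ±π/2`, where `sin θ = ±1` violates one of the two bounds because their coefficients of
`sin θ` have opposite signs.
-/

open Real Set

namespace Real

lemma cos_pos_of_mul_sin_le_mul_cos {a b c d θ : ℝ} (ha : a < 0) (hc : 0 < c)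
    (h₁ : a * sin θ ≤ b * cos θ) (h₂ : c * sin θ ≤ d * cos θ) (hcos : 0 ≤ cos θ) :
    0 < cos θ := by
  refine hcos.lt_of_ne fun hzero => ?_
  rw [← hzero, mul_zero] at h₁ h₂
  have hsin : sin θ = 0 :=
    le_antisymm (nonpos_of_mul_nonpos_right h₂ hc) (nonneg_of_mul_nonpos_right h₁ ha)
  simpa [hsin, ← hzero] using sin_sq_add_cos_sq θ

lemma mem_Ioo_of_mem_Icc_of_cos_pos {θ : ℝ} (hθ : θ ∈ Icc (-π) π) (hcos : 0 < cos θ) :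
    θ ∈ Ioo (-(π / 2)) (π / 2) := by
  obtain ⟨hl, hu⟩ := hθ
  constructor
  · by_contra! h
    have := cos_nonpos_of_pi_div_two_le_of_le (x := -θ) (by linarith) (by linarith [pi_pos])
    rw [cos_neg] at this
    linarith
  · by_contra! h
    have := cos_nonpos_of_pi_div_two_le_of_le h (by linarith [pi_pos])
    linarith

lemma arctan_le_iff_le_tan {x θ : ℝ} (hθ : θ ∈ Ioo (-(π / 2)) (π / 2)) :
    arctan x ≤ θ ↔ x ≤ tan θ := by
  simpa only [arctan_tan hθ.1 hθ.2] using arctan_le_arctan_iff (x := x) (y := tan θ)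

lemma le_arctan_iff_tan_le {x θ : ℝ} (hθ : θ ∈ Ioo (-(π / 2)) (π / 2)) :
    θ ≤ arctan x ↔ tan θ ≤ x := by
  simpa only [arctan_tan hθ.1 hθ.2] using arctan_le_arctan_iff (x := tan θ) (y := x)

lemma div_le_tan_iff_of_neg {a b θ : ℝ} (ha : a < 0) (hcos : 0 < cos θ) :
    b / a ≤ tan θ ↔ a * sin θ ≤ b * cos θ := by
  rw [tan_eq_sin_div_cos, div_le_iff_of_neg ha, div_mul_eq_mul_div, div_le_iff₀ hcos, mul_comm]

lemma tan_le_div_iff_of_pos {a b θ : ℝ} (ha : 0 < a) (hcos : 0 < cos θ) :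
    tan θ ≤ b / a ↔ a * sin θ ≤ b * cos θ := by
  rw [tan_eq_sin_div_cos, le_div_iff₀ ha, div_mul_eq_mul_div, div_le_iff₀ hcos, mul_comm]

theorem setOf_mul_sin_le_mul_cos_eq_Icc_arctan {a b c d : ℝ} (ha : a < 0) (hc : 0 < c) :
    {θ : ℝ | θ ∈ Icc (-π) π ∧ a * sin θ ≤ b * cos θ ∧ 0 ≤ cos θ ∧ c * sin θ ≤ d * cos θ} =
      Icc (arctan (b / a)) (arctan (d / c)) := by
  ext θ
  constructor
  · rintro ⟨hθ, h₁, hcos₀, h₂⟩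
    have hcos : 0 < cos θ := cos_pos_of_mul_sin_le_mul_cos ha hc h₁ h₂ hcos₀
    have hθ' := mem_Ioo_of_mem_Icc_of_cos_pos hθ hcos
    exact ⟨(arctan_le_iff_le_tan hθ').2 ((div_le_tan_iff_of_neg ha hcos).2 h₁),
      (le_arctan_iff_tan_le hθ').2 ((tan_le_div_iff_of_pos hc hcos).2 h₂)⟩
  · rintro ⟨hl, hu⟩
    have hθ : θ ∈ Ioo (-(π / 2)) (π / 2) :=
      ⟨(neg_pi_div_two_lt_arctan _).trans_le hl, hu.trans_lt (arctan_lt_pi_div_two _)⟩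
    have hcos := cos_pos_of_mem_Ioo hθ
    refine ⟨⟨by linarith [hθ.1, pi_pos], by linarith [hθ.2, pi_pos]⟩,
      (div_le_tan_iff_of_neg ha hcos).1 ((arctan_le_iff_le_tan hθ).1 hl), hcos.le,
      (tan_le_div_iff_of_pos hc hcos).1 ((le_arctan_iff_tan_le hθ).1 hu)⟩

end Real

theorem conditional_identified_set_for_theta_shock_sign_general
    (σ11 σ21 σ22 y1 y2 : ℝ)
    (hσ21 : σ21 < 0)
    (hy : 0 < σ21 * y1 - σ11 * y2) :
    {θ : ℝ | θ ∈ Set.Icc (-π) π ∧ σ21 * Real.sin θ ≤ σ22 * Real.cos θ ∧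
        0 ≤ Real.cos θ ∧ (σ21 * y1 - σ11 * y2) * Real.sin θ ≤ σ22 * y1 * Real.cos θ} =
      Set.Icc (arctan (σ22 / σ21)) (arctan (σ22 * y1 / (σ21 * y1 - σ11 * y2))) :=
  setOf_mul_sin_le_mul_cos_eq_Icc_arctan hσ21 hy

theorem conditional_identified_set_for_theta_shock_sign
    (σ11 σ21 σ22 y1 y2 : ℝ)
    (hσ11 : 0 < σ11) (hσ22 : 0 < σ22) (hσ21 : σ21 < 0)
    (hy : 0 < σ21 * y1 - σ11 * y2) (hy1 : 0 < y1) :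
    {θ : ℝ | θ ∈ Set.Icc (-π) π ∧ σ21 * Real.sin θ ≤ σ22 * Real.cos θ ∧
        0 ≤ Real.cos θ ∧ (σ21 * y1 - σ11 * y2) * Real.sin θ ≤ σ22 * y1 * Real.cos θ} =
      Set.Icc (arctan (σ22 / σ21)) (arctan (σ22 * y1 / (σ21 * y1 - σ11 * y2))) :=
  conditional_identified_set_for_theta_shock_sign_general σ11 σ21 σ22 y1 y2 hσ21 hy
end

section
/- Let C ⊆ R^n be a closed convex cone with nonempty interior, C ≠ R^n, and let S^{n-1} be the unit sphere with n ≥ 2. Then C ∩ S^{n-1} is path-connected. -/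
/-!
Pick `x₀` in the interior of `C`. Since `C` is a cone other than the whole space, `0` is not an
interior point; the half-open segment from `x₀` to any nonzero `y ∈ C` lies in the interior, so
it never meets `0`: the punctured cone `C \ {0}` is star-shaped about `x₀`, hence
path-connected. Radial projection `x ↦ ‖x‖⁻¹ • x` is continuous on it and maps it onto
`C ∩ S^{n-1}`.
-/

open Set Filter Topology

section Cone

variable {E : Type*} [AddCommGroup E] [Module ℝ E] [TopologicalSpace E] [ContinuousSMul ℝ E]
  {C : Set E}

theorem eq_univ_of_zero_mem_interior_of_smul_mem
    (hcone : ∀ c : ℝ, 0 < c → ∀ x ∈ C, c • x ∈ C) (h0 : (0 : E) ∈ interior C) : C = univ := by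
  refine eq_univ_of_forall fun x ↦ ?_
  have hsmall : Tendsto (fun t : ℝ ↦ t • x) (𝓝[>] 0) (𝓝 0) :=
    ((continuous_id.smul continuous_const).tendsto' 0 0 (zero_smul ℝ x)).mono_left
      nhdsWithin_le_nhds
  obtain ⟨t, htC, ht⟩ := ((hsmall.eventually (mem_interior_iff_mem_nhds.1 h0)).and
    self_mem_nhdsWithin).exists
  simpa [smul_smul, inv_mul_cancel₀ (ne_of_gt ht)] using hcone t⁻¹ (inv_pos.2 ht) _ htC

theorem starConvex_diff_zero_of_mem_interior [IsTopologicalAddGroup E] (hconv : Convex ℝ C)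
    {x₀ : E} (hx₀ : x₀ ∈ interior C) (h0 : (0 : E) ∉ interior C) : StarConvex ℝ x₀ (C \ {0}) := by
  rintro y ⟨hyC, hy0⟩ a b ha hb hab
  rcases ha.eq_or_lt with rfl | ha
  · simp_all
  have hint : a • x₀ + b • y ∈ interior C :=
    hconv.combo_interior_self_mem_interior hx₀ hyC ha hb hab
  exact ⟨interior_subset hint, fun h ↦ h0 (h ▸ hint)⟩

end Cone

theorem image_normalize_diff_zero_eq_inter_sphere {E : Type*} [NormedAddCommGroup E]
    [NormedSpace ℝ E] {C : Set E} (hcone : ∀ c : ℝ, 0 < c → ∀ x ∈ C, c • x ∈ C) :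
    (fun x : E ↦ ‖x‖⁻¹ • x) '' (C \ {0}) = C ∩ Metric.sphere 0 1 := by
  ext y
  constructor
  · rintro ⟨x, ⟨hxC, hx0⟩, rfl⟩
    have hx : 0 < ‖x‖ := norm_pos_iff.2 hx0
    refine ⟨hcone _ (inv_pos.2 hx) x hxC, ?_⟩
    simp [norm_smul, hx.ne']
  · rintro ⟨hyC, hy⟩
    have hy1 : ‖y‖ = 1 := by simpa using hy
    refine ⟨y, ⟨hyC, fun h ↦ ?_⟩, by simp [hy1]⟩
    simp [show y = 0 from h] at hy1

theorem convex_cone_inter_sphere_pathconnected_general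
    (n : ℕ) (C : Set (EuclideanSpace ℝ (Fin n)))
    (hconv : Convex ℝ C)
    (hcone : ∀ c : ℝ, 0 < c → ∀ x ∈ C, c • x ∈ C)
    (hint : (interior C).Nonempty) (hne : C ≠ Set.univ) :
    IsPathConnected (C ∩ Metric.sphere (0 : EuclideanSpace ℝ (Fin n)) 1) := by
  obtain ⟨x₀, hx₀⟩ := hint
  have h0 : (0 : EuclideanSpace ℝ (Fin n)) ∉ interior C :=
    fun h ↦ hne (eq_univ_of_zero_mem_interior_of_smul_mem hcone h)
  have hx₀0 : x₀ ≠ 0 := fun h ↦ h0 (h ▸ hx₀)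
  have hpunctured : IsPathConnected (C \ {0}) :=
    (starConvex_diff_zero_of_mem_interior hconv hx₀ h0).isPathConnected
      ⟨interior_subset hx₀, hx₀0⟩
  have hnormalize : ContinuousOn (fun x : EuclideanSpace ℝ (Fin n) ↦ ‖x‖⁻¹ • x) (C \ {0}) :=
    (continuousOn_id.norm.inv₀ fun x hx ↦ norm_ne_zero_iff.2 hx.2).smul continuousOn_id
  rw [← image_normalize_diff_zero_eq_inter_sphere hcone]
  exact hpunctured.image' hnormalize

theorem convex_cone_inter_sphere_pathconnected
    (n : ℕ) (hn : 2 ≤ n) (C : Set (EuclideanSpace ℝ (Fin n)))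
    (hclosed : IsClosed C) (hconv : Convex ℝ C)
    (hcone : ∀ c : ℝ, 0 < c → ∀ x ∈ C, c • x ∈ C)
    (hint : (interior C).Nonempty) (hne : C ≠ Set.univ) :
    IsPathConnected (C ∩ Metric.sphere (0 : EuclideanSpace ℝ (Fin n)) 1) :=
  convex_cone_inter_sphere_pathconnected_general n C hconv hcone hint hne
end
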